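/- arXiv:1302.1511 — 3 statements merged into one kernel-verified Lean document; each statement's English description precedes it below -/
import Mathlib

section
/- Let L ≥ 1, w ≥ 1, d_r ≥ 2 be integers with L ≥ 2w − 1, let ε ∈ [0,1) and β ≥ 0 be reals, and let P_L be the associated L×L matrix with c = (d_r − 1)·exp(−β(1−ε)). Then P_L has a real eigenvalue μ (a real μ with a nonzero v ∈ ℝ^L satisfying P_L v = μ v) with μ ≥ c · (1 − (w−1)(w+1)/(3wL)). -/
/-!
`P_L` is symmetric, so its largest eigenvalue, the supremum of the Rayleigh quotient, is at least
the Rayleigh quotient at the all-ones vector. That quotient is `c / (w² L)` times the total tent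
weight `S = ∑_{i,j<L} (w - |i - j|)₊`. Enlarging the grid from `L` to `L + 1` adds
`2 ∑_{k=1}^{L} (w - k)₊ + w`, which is `w²` once `L ≥ w`; hence `3 S = 3 w² L - w³ + w`.
-/

/-- The Jacobian matrix `P_L` of density evolution at the zero fixed point:
`(P_L)_{i,j} = c (w - |i-j|)/w²` for `|i-j| ≤ w` and `0` otherwise, where
`c = (d_r - 1) exp(-β(1-ε))`. -/
noncomputable def PL (L w dr : ℕ) (ε β : ℝ) : Matrix (Fin L) (Fin L) ℝ :=
  fun i j =>
    if |((i : ℕ) : ℝ) - ((j : ℕ) : ℝ)| ≤ (w : ℝ) then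
      ((dr : ℝ) - 1) * Real.exp (-β * (1 - ε)) *
        ((w : ℝ) - |((i : ℕ) : ℝ) - ((j : ℕ) : ℝ)|) / (w : ℝ) ^ 2
    else 0

open Finset Matrix

def bandSum (w L : ℕ) : ℕ := ∑ i ∈ range L, ∑ j ∈ range L, (w - Nat.dist i j)

section

variable {w L : ℕ}

lemma two_mul_sum_range_tsub_succ_of_le (hL : L ≤ w) :
    2 * ∑ k ∈ range L, (w - (k + 1)) + L * (L + 1) = 2 * L * w := by
  induction L with
  | zero => simp
  | succ L ih =>
    rw [sum_range_succ]
    have := ih (by omega)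
    zify [hL] at this ⊢
    linarith

lemma two_mul_sum_range_tsub_succ_of_ge (hL : w ≤ L) :
    2 * ∑ k ∈ range L, (w - (k + 1)) + w = w ^ 2 := by
  obtain ⟨m, rfl⟩ := Nat.exists_eq_add_of_le hL
  have hw := two_mul_sum_range_tsub_succ_of_le (le_refl w)
  rw [sum_range_add, sum_eq_zero (s := range m) fun k _ ↦ by omega]
  linarith

lemma sum_range_tsub_dist_right (w L : ℕ) :
    ∑ i ∈ range L, (w - Nat.dist i L) = ∑ k ∈ range L, (w - (k + 1)) := by
  rw [← sum_range_reflect]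
  refine sum_congr rfl fun k hk ↦ ?_
  rw [Nat.dist_eq_sub_of_le (by omega)]
  have := mem_range.mp hk
  congr 1
  omega

lemma bandSum_succ (w L : ℕ) :
    bandSum w (L + 1) = bandSum w L + 2 * ∑ k ∈ range L, (w - (k + 1)) + w := by
  have hcol := sum_range_tsub_dist_right w L
  have hrow : ∑ j ∈ range L, (w - Nat.dist L j) = ∑ k ∈ range L, (w - (k + 1)) := by
    simp_rw [Nat.dist_comm L]; exact hcol
  simp only [bandSum, sum_range_succ, sum_add_distrib, hcol, hrow, Nat.dist_self, Nat.sub_zero]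
  ring

lemma three_mul_bandSum_of_le (hL : L ≤ w) : 3 * bandSum w L + L ^ 3 = 3 * L ^ 2 * w + L := by
  induction L with
  | zero => simp [bandSum]
  | succ L ih =>
    have hS := ih (by omega)
    have hrow := two_mul_sum_range_tsub_succ_of_le (w := w) (L := L) (by omega)
    rw [bandSum_succ]
    nlinarith

lemma three_mul_bandSum_of_ge (hL : w ≤ L) : 3 * bandSum w L + w ^ 3 = 3 * w ^ 2 * L + w := by
  induction L, hL using Nat.le_induction with
  | base => linarith [three_mul_bandSum_of_le (le_refl w)]
  | succ L hL ih =>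
    rw [bandSum_succ]
    linarith [two_mul_sum_range_tsub_succ_of_ge hL]

end

namespace LinearMap.IsSymmetric

variable {E : Type*} [NormedAddCommGroup E] [InnerProductSpace ℝ E] [FiniteDimensional ℝ E]
  {T : E →ₗ[ℝ] E}

theorem exists_hasEigenvalue_ge_rayleigh (hT : T.IsSymmetric) {x : E} (hx : x ≠ 0) :
    ∃ μ, Module.End.HasEigenvalue T μ ∧ inner ℝ (T x) x / ‖x‖ ^ 2 ≤ μ := by
  have : Nontrivial E := ⟨⟨x, 0, hx⟩⟩
  refine ⟨_, hT.hasEigenvalue_iSup_of_finiteDimensional, ?_⟩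
  have hbdd : BddAbove (Set.range fun y : {y : E // y ≠ 0} ↦
      RCLike.re (inner ℝ (T y) (y : E)) / ‖(y : E)‖ ^ 2) :=
    ⟨‖LinearMap.toContinuousLinearMap T‖, by
      rintro _ ⟨y, rfl⟩
      exact (le_abs_self _).trans ((LinearMap.toContinuousLinearMap T).rayleighQuotient_le_norm y)⟩
  exact le_ciSup hbdd ⟨x, hx⟩

end LinearMap.IsSymmetric

theorem Matrix.IsHermitian.exists_eigenvalue_ge_rayleigh {n : Type*} [Fintype n] [DecidableEq n]
    {A : Matrix n n ℝ} (hA : A.IsHermitian) {x : n → ℝ} (hx : x ≠ 0) :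
    ∃ (μ : ℝ) (v : n → ℝ), v ≠ 0 ∧ A *ᵥ v = μ • v ∧ x ⬝ᵥ A *ᵥ x / (x ⬝ᵥ x) ≤ μ := by
  obtain ⟨μ, hμ, hle⟩ := (isSymmetric_toEuclideanLin_iff.mpr hA).exists_hasEigenvalue_ge_rayleigh
    (x := WithLp.toLp 2 x) (by simpa using hx)
  obtain ⟨v, hv⟩ := hμ.exists_hasEigenvector
  refine ⟨μ, v.ofLp, by simpa using hv.2, congrArg WithLp.ofLp hv.apply_eq_smul, ?_⟩
  rwa [← real_inner_self_eq_norm_sq, EuclideanSpace.inner_eq_star_dotProduct,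
    EuclideanSpace.inner_toLp_toLp, star_trivial, star_trivial] at hle

lemma Nat.cast_dist_eq_abs_sub (i j : ℕ) : ((Nat.dist i j : ℕ) : ℝ) = |(i : ℝ) - j| := by
  have : Nat.dist i j = ((i : ℤ) - j).natAbs := by unfold Nat.dist; omega
  rw [this, Nat.cast_natAbs]
  push_cast
  rfl

lemma PL_apply (L w dr : ℕ) (ε β : ℝ) (i j : Fin L) :
    PL L w dr ε β i j =
      ((dr : ℝ) - 1) * Real.exp (-β * (1 - ε)) / (w : ℝ) ^ 2 * ((w - Nat.dist i j : ℕ) : ℝ) := by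
  rw [PL, ← Nat.cast_dist_eq_abs_sub]
  split_ifs with h
  · rw [Nat.cast_sub (by exact_mod_cast h)]
    ring
  · rw [Nat.sub_eq_zero_of_le (by exact_mod_cast (not_le.mp h).le), Nat.cast_zero, mul_zero]

lemma PL_isHermitian (L w dr : ℕ) (ε β : ℝ) : (PL L w dr ε β).IsHermitian :=
  IsHermitian.ext fun i j ↦ by simp [PL_apply, Nat.dist_comm]

lemma one_dotProduct_PL_mulVec_one (L w dr : ℕ) (ε β : ℝ) :
    1 ⬝ᵥ PL L w dr ε β *ᵥ 1 =
      ((dr : ℝ) - 1) * Real.exp (-β * (1 - ε)) / (w : ℝ) ^ 2 * bandSum w L := by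
  simp only [dotProduct, mulVec, Pi.one_apply, one_mul, mul_one, PL_apply, ← mul_sum, bandSum]
  push_cast
  congr 1
  rw [Fin.sum_univ_eq_sum_range (fun i ↦ ∑ j : Fin L, ((w - Nat.dist i j : ℕ) : ℝ))]
  exact sum_congr rfl fun i _ ↦ Fin.sum_univ_eq_sum_range (fun j ↦ ((w - Nat.dist i j : ℕ) : ℝ)) L

theorem stmt_6_general (L w dr : ℕ) (hL : 1 ≤ L) (hw : 1 ≤ w)
    (hLw : 2 * w - 1 ≤ L) (ε β : ℝ) :
    ∃ (μ : ℝ) (v : Fin L → ℝ), v ≠ 0 ∧ (PL L w dr ε β).mulVec v = μ • v ∧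
      ((dr : ℝ) - 1) * Real.exp (-β * (1 - ε)) *
        (1 - ((w : ℝ) - 1) * ((w : ℝ) + 1) / (3 * (w : ℝ) * (L : ℝ))) ≤ μ := by
  have : NeZero L := ⟨by omega⟩
  obtain ⟨μ, v, hv, hPv, hμ⟩ :=
    (PL_isHermitian L w dr ε β).exists_eigenvalue_ge_rayleigh (x := 1) one_ne_zero
  refine ⟨μ, v, hv, hPv, le_of_eq_of_le ?_ hμ⟩
  have hS : 3 * (bandSum w L : ℝ) + (w : ℝ) ^ 3 = 3 * (w : ℝ) ^ 2 * L + w := by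
    exact_mod_cast three_mul_bandSum_of_ge (by omega)
  have hw0 : (w : ℝ) ≠ 0 := by positivity
  have hL0 : (L : ℝ) ≠ 0 := by positivity
  rw [one_dotProduct_PL_mulVec_one, one_dotProduct_one, Fintype.card_fin]
  field_simp
  linear_combination (1 - (dr : ℝ)) * hS

/-- for `L ≥ 2w - 1`, `P_L` has a real eigenvalue
`μ ≥ c (1 - (w-1)(w+1)/(3wL))` with `c = (d_r - 1) exp(-β(1-ε))`. -/
theorem stmt_6 (L w dr : ℕ) (hL : 1 ≤ L) (hw : 1 ≤ w) (hdr : 2 ≤ dr)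
    (hLw : 2 * w - 1 ≤ L) (ε β : ℝ) (hε : ε ∈ Set.Ico (0 : ℝ) 1) (hβ : 0 ≤ β) :
    ∃ (μ : ℝ) (v : Fin L → ℝ), v ≠ 0 ∧ (PL L w dr ε β).mulVec v = μ • v ∧
      ((dr : ℝ) - 1) * Real.exp (-β * (1 - ε)) *
        (1 - ((w : ℝ) - 1) * ((w : ℝ) + 1) / (3 * (w : ℝ) * (L : ℝ))) ≤ μ :=
  stmt_6_general L w dr hL hw hLw ε β
end

section
/- (Monotonicity of density evolution.) Fix integers L ≥ 1, w ≥ 1, d_l ≥ 2, d_r ≥ 2, d_g ≥ 2 and reals ε ∈ [0,1], β ≥ 0, and let p^{(ℓ)}, s^{(ℓ)} : ℤ → ℝ be the density evolution sequences. Then for every ℓ ≥ 0 and every i ∈ ℤ, 0 ≤ p_i^{(ℓ+1)} ≤ p_i^{(ℓ)} ≤ 1 and 0 ≤ s_i^{(ℓ+1)} ≤ s_i^{(ℓ)} ≤ 1. In particular the error probability P_b^{(ℓ)} = (1/L)·∑_{i=0}^{L−1} p_i^{(ℓ)} is nonincreasing in ℓ and converges as ℓ → ∞. -/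
/-!
The density-evolution update maps the order interval `[0, 1]^ℤ × [0, 1]^ℤ` into itself and is
monotone there, since each ingredient (window averages, `x ↦ 1 - c (1 - x)^n` with `c ∈ [0, 1]`,
and `Λ` with `β ≥ 0`) is. Every image vanishes off the chain and is at most `1` on it, so lies
below the initial profile; monotonicity then propagates `x⁽¹⁾ ≤ x⁽⁰⁾` to `x⁽ℓ⁺¹⁾ ≤ x⁽ℓ⁾` for all
`ℓ`. The averaged erasure probability is thus a nonnegative antitone sequence, hence convergent.
-/

open Set

section

variable {α : Type*} {S : Set α} {T : α → α} {x : ℕ → α}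

lemma Set.MapsTo.mem_of_succ_eq (hS : MapsTo T S S) (hx : ∀ n, x (n + 1) = T (x n))
    (h0 : x 0 ∈ S) : ∀ n, x n ∈ S
  | 0 => h0
  | n + 1 => hx n ▸ hS (hS.mem_of_succ_eq hx h0 n)

lemma MonotoneOn.antitone_of_succ_eq [Preorder α] (hT : MonotoneOn T S) (hS : MapsTo T S S)
    (hx : ∀ n, x (n + 1) = T (x n)) (h0 : x 0 ∈ S) (h10 : x 1 ≤ x 0) : Antitone x := by
  refine antitone_nat_of_succ_le fun n => ?_
  induction n with
  | zero => exact h10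
  | succ n ih =>
    calc x (n + 1 + 1) = T (x (n + 1)) := hx (n + 1)
      _ ≤ T (x n) := hT (hS.mem_of_succ_eq hx h0 (n + 1)) (hS.mem_of_succ_eq hx h0 n) ih
      _ = x (n + 1) := (hx n).symm

end

noncomputable def windowAvg (w : ℕ) (f : ℕ → ℝ) : ℝ :=
  1 / (w : ℝ) * ∑ j ∈ Finset.range w, f j

lemma windowAvg_mono {w : ℕ} {f g : ℕ → ℝ} (h : f ≤ g) : windowAvg w f ≤ windowAvg w g :=
  mul_le_mul_of_nonneg_left (Finset.sum_le_sum fun j _ => h j) (by positivity)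

lemma windowAvg_nonneg {w : ℕ} {f : ℕ → ℝ} (hf : 0 ≤ f) : 0 ≤ windowAvg w f :=
  mul_nonneg (by positivity) (Finset.sum_nonneg fun j _ => hf j)

lemma windowAvg_le_one {w : ℕ} {f : ℕ → ℝ} (hf : f ≤ 1) : windowAvg w f ≤ 1 :=
  calc windowAvg w f ≤ windowAvg w 1 := windowAvg_mono hf
    _ = 1 / (w : ℝ) * w := by simp [windowAvg]
    _ ≤ 1 := by
      rcases eq_or_ne w 0 with rfl | hw
      · simp
      · simp [hw]

noncomputable def checkFactor (w n : ℕ) (q : ℤ → ℝ) (i : ℤ) : ℝ :=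
  windowAvg w fun j => 1 - (1 - windowAvg w fun k => q (i + j - k)) ^ n

noncomputable def outputFactor (w n : ℕ) (ε β : ℝ) (t : ℤ → ℝ) (i : ℤ) : ℝ :=
  Real.exp (-β * (1 - windowAvg w fun j =>
    1 - (1 - ε) * (1 - windowAvg w fun k => t (i + j - k)) ^ n))

lemma checkFactor_mem_Icc (w n : ℕ) {q : ℤ → ℝ} (hq : q ∈ Icc 0 1) (i : ℤ) :
    checkFactor w n q i ∈ Icc 0 1 := by
  have hterm (j : ℕ) : 1 - (1 - windowAvg w fun k => q (i + j - k)) ^ n ∈ Icc (0 : ℝ) 1 := by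
    have hmem : (windowAvg w fun k => q (i + j - k)) ∈ Icc (0 : ℝ) 1 :=
      ⟨windowAvg_nonneg fun k => hq.1 _, windowAvg_le_one fun k => hq.2 _⟩
    have h := Icc.one_sub_mem hmem
    exact Icc.one_sub_mem ⟨pow_nonneg h.1 n, pow_le_one₀ h.1 h.2⟩
  exact ⟨windowAvg_nonneg fun j => (hterm j).1, windowAvg_le_one fun j => (hterm j).2⟩

lemma checkFactor_mono (w n : ℕ) {q q' : ℤ → ℝ} (hq' : q' ≤ 1) (h : q ≤ q') (i : ℤ) :
    checkFactor w n q i ≤ checkFactor w n q' i := by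
  refine windowAvg_mono fun j => ?_
  have hle : (windowAvg w fun k => q' (i + j - k)) ≤ 1 := windowAvg_le_one fun k => hq' _
  have hmono : (windowAvg w fun k => q (i + j - k)) ≤ windowAvg w fun k => q' (i + j - k) :=
    windowAvg_mono fun k => h _
  gcongr

lemma outputFactor_pos (w n : ℕ) (ε β : ℝ) (t : ℤ → ℝ) (i : ℤ) : 0 < outputFactor w n ε β t i :=
  Real.exp_pos _

lemma outputFactor_le_one (w n : ℕ) {ε β : ℝ} (hε : ε ≤ 1) (hβ : 0 ≤ β) {t : ℤ → ℝ} (ht : t ≤ 1)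
    (i : ℤ) : outputFactor w n ε β t i ≤ 1 := by
  refine Real.exp_le_one_iff.2 (mul_nonpos_of_nonpos_of_nonneg (neg_nonpos.2 hβ) ?_)
  refine sub_nonneg.2 (windowAvg_le_one fun j => sub_le_self _ ?_)
  have : (windowAvg w fun k => t (i + j - k)) ≤ 1 := windowAvg_le_one fun k => ht _
  exact mul_nonneg (sub_nonneg.2 hε) (pow_nonneg (sub_nonneg.2 this) n)

lemma outputFactor_mono (w n : ℕ) {ε β : ℝ} (hε : ε ≤ 1) (hβ : 0 ≤ β) {t t' : ℤ → ℝ}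
    (ht' : t' ≤ 1) (h : t ≤ t') (i : ℤ) :
    outputFactor w n ε β t i ≤ outputFactor w n ε β t' i := by
  refine Real.exp_le_exp.2 (mul_le_mul_of_nonpos_left ?_ (neg_nonpos.2 hβ))
  refine sub_le_sub_left (windowAvg_mono fun j => ?_) 1
  have hle : (windowAvg w fun k => t' (i + j - k)) ≤ 1 := windowAvg_le_one fun k => ht' _
  have hmono : (windowAvg w fun k => t (i + j - k)) ≤ windowAvg w fun k => t' (i + j - k) :=
    windowAvg_mono fun k => h _
  have : 0 ≤ 1 - ε := sub_nonneg.2 hε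
  gcongr

noncomputable def deUpdate (L w m nr ng : ℕ) (ε β : ℝ) (q t : ℤ → ℝ) : ℤ → ℝ :=
  (Ico 0 (L : ℤ)).indicator fun i => checkFactor w nr q i ^ m * outputFactor w ng ε β t i

noncomputable def initProfile (L : ℕ) : ℤ → ℝ :=
  (Ico 0 (L : ℤ)).indicator 1

lemma initProfile_mem_Icc (L : ℕ) :
    ((initProfile L, initProfile L) : (ℤ → ℝ) × (ℤ → ℝ)) ∈ Icc 0 1 :=
  have h0 : 0 ≤ initProfile L := indicator_nonneg fun _ _ => zero_le_one
  have h1 : initProfile L ≤ 1 := indicator_le_self' fun _ _ => zero_le_one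
  ⟨⟨h0, h0⟩, ⟨h1, h1⟩⟩

lemma deUpdate_nonneg (L w m nr ng : ℕ) (ε β : ℝ) {q : ℤ → ℝ} (hq : q ∈ Icc 0 1) (t : ℤ → ℝ) :
    0 ≤ deUpdate L w m nr ng ε β q t :=
  indicator_nonneg fun i _ =>
    mul_nonneg (pow_nonneg (checkFactor_mem_Icc w nr hq i).1 m) (outputFactor_pos w ng ε β t i).le

lemma deUpdate_le_initProfile (L w m nr ng : ℕ) {ε β : ℝ} (hε : ε ≤ 1) (hβ : 0 ≤ β)
    {q t : ℤ → ℝ} (hq : q ∈ Icc 0 1) (ht : t ≤ 1) :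
    deUpdate L w m nr ng ε β q t ≤ initProfile L := fun i => by
  refine indicator_le_indicator ?_
  have hP := checkFactor_mem_Icc w nr hq i
  exact mul_le_one₀ (pow_le_one₀ hP.1 hP.2) (outputFactor_pos w ng ε β t i).le
    (outputFactor_le_one w ng hε hβ ht i)

lemma deUpdate_mono (L w m nr ng : ℕ) {ε β : ℝ} (hε : ε ≤ 1) (hβ : 0 ≤ β)
    {q q' t t' : ℤ → ℝ} (hq : q ∈ Icc 0 1) (hq' : q' ≤ 1) (ht' : t' ≤ 1) (hqq : q ≤ q')
    (htt : t ≤ t') : deUpdate L w m nr ng ε β q t ≤ deUpdate L w m nr ng ε β q' t' := fun i => by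
  refine indicator_le_indicator ?_
  have hP := (checkFactor_mem_Icc w nr hq i).1
  have hPP := checkFactor_mono w nr hq' hqq i
  exact mul_le_mul (pow_le_pow_left₀ hP hPP m) (outputFactor_mono w ng hε hβ ht' htt i)
    (outputFactor_pos w ng ε β t i).le (pow_nonneg (hP.trans hPP) m)

noncomputable def deStep (L w dl dr dg : ℕ) (ε β : ℝ) (x : (ℤ → ℝ) × (ℤ → ℝ)) :
    (ℤ → ℝ) × (ℤ → ℝ) :=
  (deUpdate L w (dl - 1) (dr - 1) (dg - 1) ε β x.1 x.2,
    deUpdate L w dl (dr - 1) (dg - 1) ε β x.1 x.2)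

lemma deStep_le_initProfile (L w dl dr dg : ℕ) {ε β : ℝ} (hε : ε ≤ 1) (hβ : 0 ≤ β)
    {x : (ℤ → ℝ) × (ℤ → ℝ)} (hx : x ∈ Icc 0 1) :
    deStep L w dl dr dg ε β x ≤ (initProfile L, initProfile L) :=
  ⟨deUpdate_le_initProfile _ _ _ _ _ hε hβ ⟨hx.1.1, hx.2.1⟩ hx.2.2,
    deUpdate_le_initProfile _ _ _ _ _ hε hβ ⟨hx.1.1, hx.2.1⟩ hx.2.2⟩

lemma deStep_mapsTo (L w dl dr dg : ℕ) {ε β : ℝ} (hε : ε ≤ 1) (hβ : 0 ≤ β) :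
    MapsTo (deStep L w dl dr dg ε β) (Icc 0 1) (Icc 0 1) := fun x hx => by
  have hle := deStep_le_initProfile L w dl dr dg hε hβ hx
  have hP := initProfile_mem_Icc L
  exact ⟨⟨deUpdate_nonneg _ _ _ _ _ _ _ ⟨hx.1.1, hx.2.1⟩ _,
      deUpdate_nonneg _ _ _ _ _ _ _ ⟨hx.1.1, hx.2.1⟩ _⟩,
    hle.trans hP.2⟩

lemma deStep_monotoneOn (L w dl dr dg : ℕ) {ε β : ℝ} (hε : ε ≤ 1) (hβ : 0 ≤ β) :
    MonotoneOn (deStep L w dl dr dg ε β) (Icc 0 1) := fun _ hx _ hy hxy =>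
  ⟨deUpdate_mono _ _ _ _ _ hε hβ ⟨hx.1.1, hx.2.1⟩ hy.2.1 hy.2.2 hxy.1 hxy.2,
    deUpdate_mono _ _ _ _ _ hε hβ ⟨hx.1.1, hx.2.1⟩ hy.2.1 hy.2.2 hxy.1 hxy.2⟩

theorem stmt_15_general (L w dl dr dg : ℕ) (ε β : ℝ) (hε : ε ∈ Set.Icc (0 : ℝ) 1)
    (hβ : 0 ≤ β) (p s : ℕ → ℤ → ℝ)
    (hout : ∀ ℓ : ℕ, ∀ i : ℤ, (i < 0 ∨ (L : ℤ) ≤ i) → p ℓ i = 0 ∧ s ℓ i = 0)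
    (hinit : ∀ i : ℤ, 0 ≤ i → i < (L : ℤ) → p 0 i = 1 ∧ s 0 i = 1)
    (hrec : ∀ ℓ : ℕ, ∀ i : ℤ, 0 ≤ i → i < (L : ℤ) →
      p (ℓ + 1) i =
        ((1 / (w : ℝ)) * ∑ j ∈ Finset.range w,
            (1 - (1 - (1 / (w : ℝ)) * ∑ k ∈ Finset.range w,
              p ℓ (i + (j : ℤ) - (k : ℤ))) ^ (dr - 1))) ^ (dl - 1) *
          Real.exp (-β * (1 - (1 / (w : ℝ)) * ∑ j ∈ Finset.range w,
            (1 - (1 - ε) * (1 - (1 / (w : ℝ)) * ∑ k ∈ Finset.range w,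
              s ℓ (i + (j : ℤ) - (k : ℤ))) ^ (dg - 1)))) ∧
      s (ℓ + 1) i =
        ((1 / (w : ℝ)) * ∑ j ∈ Finset.range w,
            (1 - (1 - (1 / (w : ℝ)) * ∑ k ∈ Finset.range w,
              p ℓ (i + (j : ℤ) - (k : ℤ))) ^ (dr - 1))) ^ dl *
          Real.exp (-β * (1 - (1 / (w : ℝ)) * ∑ j ∈ Finset.range w,
            (1 - (1 - ε) * (1 - (1 / (w : ℝ)) * ∑ k ∈ Finset.range w,
              s ℓ (i + (j : ℤ) - (k : ℤ))) ^ (dg - 1))))) :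
    (∀ ℓ : ℕ, ∀ i : ℤ,
      (0 ≤ p (ℓ + 1) i ∧ p (ℓ + 1) i ≤ p ℓ i ∧ p ℓ i ≤ 1) ∧
      (0 ≤ s (ℓ + 1) i ∧ s (ℓ + 1) i ≤ s ℓ i ∧ s ℓ i ≤ 1)) ∧
    (∀ ℓ : ℕ,
      (1 / (L : ℝ)) * ∑ i ∈ Finset.range L, p (ℓ + 1) (i : ℤ) ≤
        (1 / (L : ℝ)) * ∑ i ∈ Finset.range L, p ℓ (i : ℤ)) ∧
    (∃ l : ℝ, Filter.Tendsto
      (fun ℓ : ℕ => (1 / (L : ℝ)) * ∑ i ∈ Finset.range L, p ℓ (i : ℤ))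
      Filter.atTop (nhds l)) := by
  set x : ℕ → (ℤ → ℝ) × (ℤ → ℝ) := fun ℓ => (p ℓ, s ℓ)
  have hoff (ℓ : ℕ) (i : ℤ) (hi : i ∉ Ico 0 (L : ℤ)) : p ℓ i = 0 ∧ s ℓ i = 0 :=
    hout ℓ i (by rwa [mem_Ico, not_and_or, not_le, not_lt] at hi)
  have hstep (ℓ : ℕ) : x (ℓ + 1) = deStep L w dl dr dg ε β (x ℓ) := by
    refine Prod.ext (funext fun i => ?_) (funext fun i => ?_) <;>
      by_cases hi : i ∈ Ico 0 (L : ℤ) <;>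
      simp only [x, deStep, deUpdate, indicator_of_mem, indicator_of_notMem, hi,
        not_false_eq_true, hoff, checkFactor, outputFactor, windowAvg]
    · exact (hrec ℓ i hi.1 hi.2).1
    · exact (hrec ℓ i hi.1 hi.2).2
  have hx0 : x 0 = (initProfile L, initProfile L) := by
    have h (i : ℤ) : p 0 i = initProfile L i ∧ s 0 i = initProfile L i := by
      by_cases hi : i ∈ Ico 0 (L : ℤ)
      · simp [initProfile, hi, hinit i hi.1 hi.2]
      · simp [initProfile, hi, hoff 0 i hi]
    exact Prod.ext (funext fun i => (h i).1) (funext fun i => (h i).2)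
  have h0 : x 0 ∈ Icc 0 1 := hx0 ▸ initProfile_mem_Icc L
  have h10 : x 1 ≤ x 0 :=
    calc x 1 = deStep L w dl dr dg ε β (x 0) := hstep 0
      _ ≤ (initProfile L, initProfile L) := deStep_le_initProfile L w dl dr dg hε.2 hβ h0
      _ = x 0 := hx0.symm
  have hmaps := deStep_mapsTo L w dl dr dg hε.2 hβ
  have hmem := hmaps.mem_of_succ_eq hstep h0
  have hanti := (deStep_monotoneOn L w dl dr dg hε.2 hβ).antitone_of_succ_eq hmaps hstep h0 h10
  have hPb : Antitone fun ℓ => (1 / (L : ℝ)) * ∑ i ∈ Finset.range L, p ℓ (i : ℤ) :=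
    fun a b hab => mul_le_mul_of_nonneg_left
      (Finset.sum_le_sum fun i _ => (hanti hab).1 i) (by positivity)
  refine ⟨fun ℓ i => ⟨⟨(hmem (ℓ + 1)).1.1 i, (hanti ℓ.le_succ).1 i, (hmem ℓ).2.1 i⟩,
    ⟨(hmem (ℓ + 1)).1.2 i, (hanti ℓ.le_succ).2 i, (hmem ℓ).2.2 i⟩⟩,
    fun ℓ => hPb ℓ.le_succ, _, tendsto_atTop_ciInf hPb ⟨0, ?_⟩⟩
  rintro _ ⟨ℓ, rfl⟩
  exact mul_nonneg (by positivity) (Finset.sum_nonneg fun i _ => (hmem ℓ).1.1 i)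

/-- monotonicity of density evolution: the density evolution
sequences `p, s` of the `(d_l, d_r, d_g, L, w)` spatially-coupled precoded
rateless code over BEC(ε) (with `Λ(x) = exp(-β(1-x))`) satisfy
`0 ≤ p_i^{(ℓ+1)} ≤ p_i^{(ℓ)} ≤ 1` and `0 ≤ s_i^{(ℓ+1)} ≤ s_i^{(ℓ)} ≤ 1`
for all `ℓ ≥ 0` and `i ∈ ℤ`; in particular the error probability
`P_b^{(ℓ)} = (1/L) ∑_{i=0}^{L-1} p_i^{(ℓ)}` is nonincreasing in `ℓ` and
converges as `ℓ → ∞`. -/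
theorem stmt_15 (L w dl dr dg : ℕ) (hL : 1 ≤ L) (hw : 1 ≤ w) (hdl : 2 ≤ dl)
    (hdr : 2 ≤ dr) (hdg : 2 ≤ dg) (ε β : ℝ) (hε : ε ∈ Set.Icc (0 : ℝ) 1)
    (hβ : 0 ≤ β) (p s : ℕ → ℤ → ℝ)
    (hout : ∀ ℓ : ℕ, ∀ i : ℤ, (i < 0 ∨ (L : ℤ) ≤ i) → p ℓ i = 0 ∧ s ℓ i = 0)
    (hinit : ∀ i : ℤ, 0 ≤ i → i < (L : ℤ) → p 0 i = 1 ∧ s 0 i = 1)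
    (hrec : ∀ ℓ : ℕ, ∀ i : ℤ, 0 ≤ i → i < (L : ℤ) →
      p (ℓ + 1) i =
        ((1 / (w : ℝ)) * ∑ j ∈ Finset.range w,
            (1 - (1 - (1 / (w : ℝ)) * ∑ k ∈ Finset.range w,
              p ℓ (i + (j : ℤ) - (k : ℤ))) ^ (dr - 1))) ^ (dl - 1) *
          Real.exp (-β * (1 - (1 / (w : ℝ)) * ∑ j ∈ Finset.range w,
            (1 - (1 - ε) * (1 - (1 / (w : ℝ)) * ∑ k ∈ Finset.range w,
              s ℓ (i + (j : ℤ) - (k : ℤ))) ^ (dg - 1)))) ∧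
      s (ℓ + 1) i =
        ((1 / (w : ℝ)) * ∑ j ∈ Finset.range w,
            (1 - (1 - (1 / (w : ℝ)) * ∑ k ∈ Finset.range w,
              p ℓ (i + (j : ℤ) - (k : ℤ))) ^ (dr - 1))) ^ dl *
          Real.exp (-β * (1 - (1 / (w : ℝ)) * ∑ j ∈ Finset.range w,
            (1 - (1 - ε) * (1 - (1 / (w : ℝ)) * ∑ k ∈ Finset.range w,
              s ℓ (i + (j : ℤ) - (k : ℤ))) ^ (dg - 1))))) :
    (∀ ℓ : ℕ, ∀ i : ℤ,
      (0 ≤ p (ℓ + 1) i ∧ p (ℓ + 1) i ≤ p ℓ i ∧ p ℓ i ≤ 1) ∧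
      (0 ≤ s (ℓ + 1) i ∧ s (ℓ + 1) i ≤ s ℓ i ∧ s ℓ i ≤ 1)) ∧
    (∀ ℓ : ℕ,
      (1 / (L : ℝ)) * ∑ i ∈ Finset.range L, p (ℓ + 1) (i : ℤ) ≤
        (1 / (L : ℝ)) * ∑ i ∈ Finset.range L, p ℓ (i : ℤ)) ∧
    (∃ l : ℝ, Filter.Tendsto
      (fun ℓ : ℕ => (1 / (L : ℝ)) * ∑ i ∈ Finset.range L, p ℓ (i : ℤ))
      Filter.atTop (nhds l)) :=
  stmt_15_general L w dl dr dg ε β hε hβ p s hout hinit hrec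
end

section
/- (Jacobian of density evolution at the zero fixed point, d_l = 2.) Fix integers L ≥ 1, w ≥ 1, d_r ≥ 2, d_g ≥ 2, reals ε ∈ [0,1], β ≥ 0, and set d_l = 2. For i ∈ {0,…,L−1} let F_i : ℝ^L × ℝ^L → ℝ be the density evolution update map. Then for every j ∈ {0,…,L−1}, the partial derivative of F_i with respect to p_j at the point (p, s) = (0, 0) equals (d_r − 1)·exp(−β(1−ε))·(w − |i − j|)/w² if |i − j| ≤ w, and 0 if |i − j| > w. -/
/-- Extension of a vector indexed by `Fin L` to a function on `ℤ` by zero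
outside `{0, …, L-1}`. -/
noncomputable def extZ (L : ℕ) (v : Fin L → ℝ) (i : ℤ) : ℝ :=
  ∑ k : Fin L, if ((k : ℕ) : ℤ) = i then v k else 0

/-- Density evolution update map `F_i(p, s) = B_i(p)^{d_l-1} Λ(A_i(s))` of the
`(d_l, d_r, d_g, L, w)` spatially-coupled precoded rateless code over BEC(ε),
with `Λ(x) = exp(-β(1-x))`. -/
noncomputable def Fmap (L w dl dr dg : ℕ) (ε β : ℝ) (i : Fin L)
    (ps : (Fin L → ℝ) × (Fin L → ℝ)) : ℝ :=
  ((1 / (w : ℝ)) * ∑ j ∈ Finset.range w,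
      (1 - (1 - (1 / (w : ℝ)) * ∑ k ∈ Finset.range w,
        extZ L ps.1 (((i : ℕ) : ℤ) + (j : ℤ) - (k : ℤ))) ^ (dr - 1))) ^ (dl - 1) *
    Real.exp (-β * (1 - (1 / (w : ℝ)) * ∑ j ∈ Finset.range w,
      (1 - (1 - ε) * (1 - (1 / (w : ℝ)) * ∑ k ∈ Finset.range w,
        extZ L ps.2 (((i : ℕ) : ℤ) + (j : ℤ) - (k : ℤ))) ^ (dg - 1))))

/-! At `s = 0` the `Λ`-factor of `F_i` is the constant `exp(-β(1-ε))`, and for `d_l = 2`,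
`F_i(t e_j, 0)` is the average over `a < w` of `1 - (1 - t n_a / w)^(d_r-1)`, where `n_a` counts
the `k < w` with `k - a = i - j`. Its derivative at `t = 0` is `(d_r-1)/w² ∑_a n_a`, and `∑_a n_a`
counts the pairs in `[0, w)²` with difference `i - j`, of which there are `max(w - |i - j|, 0)`. -/

open Finset

theorem card_filter_range_intCast_eq (w : ℕ) (m : ℤ) :
    #{k ∈ range w | ((k : ℕ) : ℤ) = m} = if 0 ≤ m ∧ m < w then 1 else 0 := by
  split_ifs with hm
  · rw [card_eq_one]
    exact ⟨m.toNat, by ext k; simp only [mem_filter, mem_range, mem_singleton]; omega⟩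
  · rw [card_eq_zero, filter_eq_empty_iff]
    intro k hk
    simp only [mem_range] at hk
    omega

theorem sum_card_filter_range_sub_eq (w : ℕ) (d : ℤ) :
    ∑ a ∈ range w, #{k ∈ range w | ((k : ℕ) : ℤ) - a = d} = ((w : ℤ) - |d|).toNat := by
  have hshift : ∀ a : ℕ,
      #{k ∈ range w | ((k : ℕ) : ℤ) - a = d} = #{k ∈ range w | ((k : ℕ) : ℤ) = a + d} :=
    fun a => congrArg card (filter_congr fun k _ => by omega)
  simp_rw [hshift, card_filter_range_intCast_eq, sum_boole, Nat.cast_id]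
  have hIco : {a ∈ range w | 0 ≤ ((a : ℕ) : ℤ) + d ∧ (a : ℤ) + d < w}
      = Ico (-d).toNat (min w ((w - d).toNat)) := by
    ext a
    simp only [mem_filter, mem_range, mem_Ico, lt_min_iff]
    omega
  rw [hIco, Nat.card_Ico]
  rcases abs_cases d with ⟨hd, _⟩ | ⟨hd, _⟩ <;> rw [hd] <;> omega

theorem extZ_zero (L : ℕ) (m : ℤ) : extZ L 0 m = 0 := by
  simp [extZ]

theorem extZ_smul_single (L : ℕ) (j : Fin L) (t : ℝ) (m : ℤ) :
    extZ L (t • Pi.single j 1) m = if ((j : ℕ) : ℤ) = m then t else 0 := by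
  rw [extZ, sum_eq_single j (fun k _ hk => by simp [hk]) (by simp)]
  simp

theorem Fmap_smul_single_zero (L w dl dr dg : ℕ) (ε β : ℝ) (i j : Fin L) (t : ℝ) :
    Fmap L w dl dr dg ε β i (t • Pi.single j 1, 0) =
      (1 / (w : ℝ) * ∑ a ∈ range w, (1 - (1 - t *
        ((#{k ∈ range w | ((k : ℕ) : ℤ) - a = (i : ℤ) - j} : ℝ) / w)) ^ (dr - 1))) ^ (dl - 1) *
      Real.exp (-β * (1 - 1 / (w : ℝ) * (w * ε))) := by
  have hcount : ∀ a : ℕ, 1 / (w : ℝ) * ∑ k ∈ range w,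
      (if ((j : ℕ) : ℤ) = (i : ℤ) + a - k then t else 0) =
        t * (#{k ∈ range w | ((k : ℕ) : ℤ) - a = (i : ℤ) - j} / w) := by
    intro a
    rw [← sum_filter, sum_const, nsmul_eq_mul,
      filter_congr fun k _ => show _ ↔ ((k : ℕ) : ℤ) - a = (i : ℤ) - j by omega]
    ring
  simp only [Fmap, extZ_smul_single, extZ_zero, hcount, sum_const, card_range, nsmul_eq_mul,
    mul_zero, sub_zero, one_pow, mul_one, sub_sub_cancel]

theorem hasDerivAt_one_sub_one_sub_mul_pow (n : ℕ) (c : ℝ) :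
    HasDerivAt (fun t : ℝ => 1 - (1 - t * c) ^ n) (n * c) 0 := by
  have h := ((((hasDerivAt_id' (0 : ℝ)).mul_const c).const_sub 1).fun_pow n).const_sub 1
  exact h.congr_deriv (by simp)

theorem hasDerivAt_Fmap_smul_single_zero (L w dr dg : ℕ) (ε β : ℝ) (i j : Fin L) :
    HasDerivAt (fun t : ℝ => Fmap L w 2 dr dg ε β i (t • Pi.single j 1, 0))
      ((dr - 1 : ℕ) * (((w : ℤ) - |(i : ℤ) - j|).toNat : ℝ) / (w : ℝ) ^ 2 *
        Real.exp (-β * (1 - 1 / (w : ℝ) * (w * ε)))) 0 := by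
  simp only [Fmap_smul_single_zero, Nat.add_one_sub_one, pow_one]
  have h := ((HasDerivAt.fun_sum fun (a : ℕ) (_ : a ∈ range w) =>
    hasDerivAt_one_sub_one_sub_mul_pow (dr - 1)
      ((#{k ∈ range w | ((k : ℕ) : ℤ) - a = (i : ℤ) - j} : ℝ) / w)).const_mul
        (1 / (w : ℝ))).mul_const (Real.exp (-β * (1 - 1 / (w : ℝ) * (w * ε))))
  refine h.congr_deriv ?_
  rw [← sum_card_filter_range_sub_eq, Nat.cast_sum, mul_sum, mul_sum, sum_div, sum_mul, sum_mul]
  refine sum_congr rfl fun a _ => ?_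
  ring

theorem cast_toNat_sub_abs (w : ℕ) (d : ℤ) :
    (((w : ℤ) - |d|).toNat : ℝ) = if |(d : ℝ)| ≤ w then w - |(d : ℝ)| else 0 := by
  rw [← Int.cast_natCast, Int.toNat_eq_max, Int.cast_max]
  push_cast
  split_ifs with h
  · exact max_eq_left (sub_nonneg.mpr h)
  · exact max_eq_right (by linarith)

theorem stmt_16_general (L w dl dr dg : ℕ) (hdl : dl = 2)
    (hdr : 2 ≤ dr) (ε β : ℝ) :
    ∀ i j : Fin L,
      deriv (fun t : ℝ => Fmap L w dl dr dg ε β i (t • (Pi.single j 1 : Fin L → ℝ), (0 : Fin L → ℝ))) 0 =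
        if |((i : ℕ) : ℝ) - ((j : ℕ) : ℝ)| ≤ (w : ℝ) then
          ((dr : ℝ) - 1) * Real.exp (-β * (1 - ε)) *
            ((w : ℝ) - |((i : ℕ) : ℝ) - ((j : ℕ) : ℝ)|) / (w : ℝ) ^ 2
        else 0 := by
  intro i j
  subst hdl
  rw [(hasDerivAt_Fmap_smul_single_zero L w dr dg ε β i j).deriv, cast_toNat_sub_abs,
    Nat.cast_sub (by omega : 1 ≤ dr), Nat.cast_one]
  push_cast
  rcases eq_or_ne (w : ℝ) 0 with hw | hw
  · -- every term carries the junk factor `1 / 0 = 0`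
    simp [hw]
  · rw [show 1 / (w : ℝ) * (w * ε) = ε by field_simp]
    split_ifs <;> ring

/-- Jacobian of density evolution at the zero fixed point,
`d_l = 2`: the partial derivative of `F_i` with respect to `p_j` at
`(p, s) = (0, 0)` equals `(d_r - 1) exp(-β(1-ε)) (w - |i-j|)/w²` if
`|i - j| ≤ w`, and `0` otherwise. -/
theorem stmt_16 (L w dl dr dg : ℕ) (hL : 1 ≤ L) (hw : 1 ≤ w) (hdl : dl = 2)
    (hdr : 2 ≤ dr) (hdg : 2 ≤ dg) (ε β : ℝ) (hε : ε ∈ Set.Icc (0 : ℝ) 1)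
    (hβ : 0 ≤ β) :
    ∀ i j : Fin L,
      deriv (fun t : ℝ => Fmap L w dl dr dg ε β i (t • (Pi.single j 1 : Fin L → ℝ), (0 : Fin L → ℝ))) 0 =
        if |((i : ℕ) : ℝ) - ((j : ℕ) : ℝ)| ≤ (w : ℝ) then
          ((dr : ℝ) - 1) * Real.exp (-β * (1 - ε)) *
            ((w : ℝ) - |((i : ℕ) : ℝ) - ((j : ℕ) : ℝ)|) / (w : ℝ) ^ 2
        else 0 :=
  stmt_16_general L w dl dr dg hdl hdr ε β
end
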